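/- Let F be a free group of rank n ≥ 2. There exists a constant c = 2n(4n²−3n+1) / ((2n−1)^{1/3}((2n−1)^{2/3}−1)) such that every distinct difference configuration D in F of diameter at most d satisfies |D| ≤ c·(2n−1)^{d/3}. -/

import Mathlib

/-- A subset `D` of a group is a distinct difference configuration. -/
def IsDDC {G : Type*} [Group G] (D : Set G) : Prop :=
  ∀ g ∈ D, ∀ h ∈ D, ∀ g' ∈ D, ∀ h' ∈ D,
    g ≠ h → g' ≠ h' → g⁻¹ * h = g'⁻¹ * h' → g = g' ∧ h = h'

/-! In the Cayley tree of `F`, a set of diameter `d` lies, after a left translation, in the ball of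
radius `R = ⌈d/2⌉` about `1`: centre it at the midpoint of a diametral pair. Truncating each
element to its first `e` letters maps `D` into the ball `B_e`. Two distinct elements with the same
truncation share a prefix of length `e`, so their difference has length at most `2R - 2e`; by the
DDC property these differences are pairwise distinct and nontrivial. Hence
`|D| + 1 ≤ |B_e| + |B_{2R-2e}|`, and `(n - 1) |B_k| < n (2n-1)^k` with `e = ⌊d/3⌋ + 1` balances
the two terms at `(2n-1)^{d/3}`. -/

open Finset

theorem Finset.card_le_card_image_add_card_filter_offDiag {ι M : Type*} [DecidableEq ι]
    [DecidableEq M] (f : ι → M) (s : Finset ι) :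
    #s ≤ #(s.image f) + #{p ∈ s.offDiag | f p.1 = f p.2} := by
  induction s using Finset.induction_on with
  | empty => simp
  | insert x s hx ih =>
    rw [card_insert_of_notMem hx, image_insert]
    by_cases h : f x ∈ s.image f
    · obtain ⟨y, hy, hyx⟩ := mem_image.1 h
      have hnew : (x, y) ∉ {p ∈ s.offDiag | f p.1 = f p.2} :=
        fun hxy => hx (mem_offDiag.1 (mem_filter.1 hxy).1).1
      have hpairs : insert (x, y) {p ∈ s.offDiag | f p.1 = f p.2} ⊆
          {p ∈ (insert x s).offDiag | f p.1 = f p.2} := by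
        refine insert_subset_iff.2 ⟨?_, filter_subset_filter _ (offDiag_mono (subset_insert x s))⟩
        exact mem_filter.2 ⟨mem_offDiag.2 ⟨mem_insert_self x s, mem_insert_of_mem hy,
          fun hxy => hx (by rwa [show x = y from hxy])⟩, hyx.symm⟩
      have hcard := card_le_card hpairs
      rw [card_insert_of_notMem hnew] at hcard
      rw [insert_eq_of_mem h]
      omega
    · have hcard := card_le_card (filter_subset_filter (fun p : ι × ι => f p.1 = f p.2)
        (offDiag_mono (subset_insert x s)))
      rw [card_insert_of_notMem h]
      omega

theorem IsDDC.image_mul_left {G : Type*} [Group G] {D : Set G} (hD : IsDDC D) (a : G) :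
    IsDDC ((a * ·) '' D) := by
  rintro _ ⟨g, hg, rfl⟩ _ ⟨h, hh, rfl⟩ _ ⟨g', hg', rfl⟩ _ ⟨h', hh', rfl⟩ hne hne' heq
  simp only [mul_inv_rev, mul_assoc, inv_mul_cancel_left] at heq
  obtain ⟨rfl, rfl⟩ := hD g hg h hh g' hg' h' hh' (fun e => hne (congrArg (a * ·) e))
    (fun e => hne' (congrArg (a * ·) e)) heq
  exact ⟨rfl, rfl⟩

namespace List

variable {β : Type*} [DecidableEq β]

def commonPrefixLength : List β → List β → ℕ
  | a :: l, b :: m => if a = b then commonPrefixLength l m + 1 else 0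
  | _, _ => 0

@[simp] lemma commonPrefixLength_nil_left (m : List β) : commonPrefixLength [] m = 0 := by
  cases m <;> rfl

@[simp] lemma commonPrefixLength_nil_right (l : List β) : commonPrefixLength l [] = 0 := by
  cases l <;> rfl

lemma commonPrefixLength_cons_cons (a b : β) (l m : List β) :
    commonPrefixLength (a :: l) (b :: m) =
      if a = b then commonPrefixLength l m + 1 else 0 := rfl

lemma commonPrefixLength_le_length_left :
    ∀ l m : List β, commonPrefixLength l m ≤ l.length
  | [], _ | _ :: _, [] => by simp
  | a :: l, b :: m => by
    rw [commonPrefixLength_cons_cons]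
    split
    · simpa using commonPrefixLength_le_length_left l m
    · simp

lemma take_commonPrefixLength :
    ∀ l m : List β, l.take (commonPrefixLength l m) = m.take (commonPrefixLength l m)
  | [], _ | _ :: _, [] => by simp
  | a :: l, b :: m => by
    rw [commonPrefixLength_cons_cons]
    split
    · next h => simp [take_commonPrefixLength l m, h]
    · simp

lemma commonPrefixLength_le_length_right (l m : List β) : commonPrefixLength l m ≤ m.length := by
  have h := congrArg length (take_commonPrefixLength l m)
  simp only [length_take] at h
  have := commonPrefixLength_le_length_left l m
  omega

lemma le_commonPrefixLength : ∀ {k : ℕ} {l m : List β}, k ≤ l.length →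
    l.take k = m.take k → k ≤ commonPrefixLength l m
  | 0, _, _, _, _ => Nat.zero_le _
  | _ + 1, [], _, hk, _ => by simp at hk
  | _ + 1, _ :: _, [], _, he => by simp at he
  | k + 1, a :: l, b :: m, hk, he => by
    simp only [take_succ_cons, cons.injEq] at he
    rw [commonPrefixLength_cons_cons, if_pos he.1]
    exact Nat.succ_le_succ (le_commonPrefixLength (by simpa using hk) he.2)

lemma head?_drop_commonPrefixLength_ne : ∀ {l m : List β} {a b : β},
    a ∈ (l.drop (commonPrefixLength l m)).head? →
      b ∈ (m.drop (commonPrefixLength l m)).head? → a ≠ b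
  | [], _, _, _ | _ :: _, [], _, _ => by simp
  | a' :: l, b' :: m, a, b => by
    rw [commonPrefixLength_cons_cons]
    split
    · simpa using head?_drop_commonPrefixLength_ne
    · next h =>
      simp only [drop_zero, head?_cons, Option.mem_some_iff]
      rintro rfl rfl
      exact h

lemma commonPrefixLength_take_left : ∀ (l m : List β) (t : ℕ),
    commonPrefixLength (l.take t) m = min (commonPrefixLength l m) t
  | [], _, _ | _ :: _, [], _ => by simp
  | _ :: _, _ :: _, 0 => by simp
  | a :: l, b :: m, t + 1 => by
    simp only [take_succ_cons, commonPrefixLength_cons_cons, commonPrefixLength_take_left l m t]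
    split <;> omega

end List

namespace FreeGroup

variable {α : Type*}

theorem IsReduced.invRev {L : List (α × Bool)} (h : IsReduced L) : IsReduced (invRev L) := by
  rw [FreeGroup.invRev, IsReduced, List.isChain_reverse, List.isChain_map]
  exact h.imp fun a b hab hba => by simpa using (hab hba.symm).symm

variable [DecidableEq α]

instance : DecidablePred (IsReduced (α := α)) := fun L => inferInstanceAs (Decidable (L.IsChain _))

lemma toWord_mk_of_isReduced {L : List (α × Bool)} (h : IsReduced L) : (mk L).toWord = L := by
  rw [toWord_mk, h.reduce_eq]

theorem norm_inv_mul_add_two_mul_commonPrefixLength (g h : FreeGroup α) :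
    (g⁻¹ * h).norm + 2 * List.commonPrefixLength g.toWord h.toWord = g.norm + h.norm := by
  set k := List.commonPrefixLength g.toWord h.toWord
  set x := g.toWord.drop k
  set y := h.toWord.drop k
  have hg : mk (h.toWord.take k) * mk x = g := by
    rw [← List.take_commonPrefixLength, mul_mk, List.take_append_drop, mk_toWord]
  have hh : mk (h.toWord.take k) * mk y = h := by
    rw [mul_mk, List.take_append_drop, mk_toWord]
  have hprod : g⁻¹ * h = mk (invRev x ++ y) := by
    calc g⁻¹ * h = (mk (h.toWord.take k) * mk x)⁻¹ * (mk (h.toWord.take k) * mk y) := by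
          rw [hg, hh]
      _ = mk (invRev x ++ y) := by rw [← mul_mk, ← inv_mk]; group
  have hred : IsReduced (invRev x ++ y) := by
    refine List.isChain_append.2 ⟨(isReduced_toWord.infix (List.drop_suffix _ _).isInfix).invRev,
      isReduced_toWord.infix (List.drop_suffix _ _).isInfix, ?_⟩
    intro u hu b hb
    rw [FreeGroup.invRev, List.getLast?_reverse, List.head?_map, Option.mem_map] at hu
    obtain ⟨a, ha, rfl⟩ := hu
    have hab := List.head?_drop_commonPrefixLength_ne ha hb
    intro h1
    by_contra h2
    exact hab (Prod.ext h1 (by simpa using h2))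
  have hk := List.commonPrefixLength_le_length_left g.toWord h.toWord
  have hk' := List.commonPrefixLength_le_length_right g.toWord h.toWord
  rw [hprod, norm, toWord_mk_of_isReduced hred, List.length_append, invRev_length,
    List.length_drop, List.length_drop, norm, norm]
  omega

def truncate (k : ℕ) (g : FreeGroup α) : FreeGroup α := mk (g.toWord.take k)

lemma toWord_truncate (k : ℕ) (g : FreeGroup α) : (truncate k g).toWord = g.toWord.take k :=
  toWord_mk_of_isReduced (isReduced_toWord.infix (List.take_prefix _ _).isInfix)

lemma norm_truncate (k : ℕ) (g : FreeGroup α) : (truncate k g).norm = min k g.norm := by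
  rw [norm, toWord_truncate, List.length_take, norm]

lemma truncate_eq_self {k : ℕ} {g : FreeGroup α} (h : g.norm ≤ k) : truncate k g = g := by
  rw [truncate, List.take_of_length_le h, mk_toWord]

lemma norm_inv_mul_add_two_mul_le_of_truncate_eq {k : ℕ} {g h : FreeGroup α} (hne : g ≠ h)
    (hgh : truncate k g = truncate k h) : (g⁻¹ * h).norm + 2 * k ≤ g.norm + h.norm := by
  have hmin : min k g.norm = min k h.norm := by rw [← norm_truncate, ← norm_truncate, hgh]
  by_cases hk : k ≤ g.norm
  · have htake : g.toWord.take k = h.toWord.take k := by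
      rw [← toWord_truncate, ← toWord_truncate, hgh]
    have hprefix := List.le_commonPrefixLength hk htake
    have hgromov := norm_inv_mul_add_two_mul_commonPrefixLength g h
    omega
  · exact absurd (by rwa [truncate_eq_self (by omega), truncate_eq_self (by omega)] at hgh) hne

theorem exists_norm_inv_mul_le_of_diam_le {S : Finset (FreeGroup α)} (hS : S.Nonempty) {d : ℕ}
    (hd : ∀ g ∈ S, ∀ h ∈ S, (g⁻¹ * h).norm ≤ d) :
    ∃ v : FreeGroup α, ∀ g ∈ S, (v⁻¹ * g).norm ≤ (d + 1) / 2 := by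
  obtain ⟨⟨g₀, h₀⟩, hp, hmax⟩ :=
    Finset.exists_max_image (S ×ˢ S) (fun p => (p.1⁻¹ * p.2).norm) (hS.product hS)
  rw [Finset.mem_product] at hp
  set x := g₀⁻¹ * h₀
  refine ⟨g₀ * truncate (x.norm / 2) x, fun g hg => ?_⟩
  set u := g₀⁻¹ * g
  have hu : u.norm ≤ x.norm := hmax (g₀, g) (Finset.mem_product.2 ⟨hp.1, hg⟩)
  have hxu : (x⁻¹ * u).norm ≤ x.norm := by
    have : x⁻¹ * u = h₀⁻¹ * g := by simp only [x, u]; group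
    exact this ▸ hmax (h₀, g) (Finset.mem_product.2 ⟨hp.2, hg⟩)
  have hx : x.norm ≤ d := hd g₀ hp.1 h₀ hp.2
  have hmid := norm_inv_mul_add_two_mul_commonPrefixLength (truncate (x.norm / 2) x) u
  rw [toWord_truncate, List.commonPrefixLength_take_left, norm_truncate] at hmid
  have hxu' := norm_inv_mul_add_two_mul_commonPrefixLength x u
  have hv : (g₀ * truncate (x.norm / 2) x)⁻¹ * g = (truncate (x.norm / 2) x)⁻¹ * u := by
    rw [mul_inv_rev, mul_assoc]
  rw [hv]
  -- `hxu` and `hxu'` give `|u| ≤ 2c`, where `c` is the common prefix length of `x` and `u`. If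
  -- `c ≥ ⌊|x|/2⌋` the midpoint is at distance `|u| - ⌊|x|/2⌋ ≤ ⌈|x|/2⌉` from `u`, otherwise at
  -- distance at most `⌊|x|/2⌋`.
  omega

variable [Fintype α]

def sphere (k : ℕ) : Finset (FreeGroup α) :=
  {g ∈ (univ : Finset (Fin k → α × Bool)).image (fun w => mk (List.ofFn w)) | g.norm = k}

@[simp] lemma mem_sphere {k : ℕ} {g : FreeGroup α} : g ∈ sphere k ↔ g.norm = k := by
  refine ⟨fun h => (mem_filter.1 h).2, fun h => mem_filter.2 ⟨?_, h⟩⟩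
  subst h
  exact mem_image.2 ⟨g.toWord.get, mem_univ _, (congrArg mk (List.ofFn_get _)).trans mk_toWord⟩

lemma sphere_zero : sphere (α := α) 0 = {1} := by ext; simp

def ball (k : ℕ) : Finset (FreeGroup α) := (range (k + 1)).biUnion sphere

@[simp] lemma mem_ball {k : ℕ} {g : FreeGroup α} : g ∈ ball k ↔ g.norm ≤ k := by
  simp [ball]

lemma ball_succ (k : ℕ) : ball (α := α) (k + 1) = ball k ∪ sphere (k + 1) := by
  ext; simp [Nat.le_succ_iff]

lemma card_filter_isReduced_cons_le {L : List (α × Bool)} (hL : L ≠ []) :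
    #{a | IsReduced (a :: L)} ≤ 2 * Fintype.card α - 1 := by
  obtain ⟨b, L, rfl⟩ := List.exists_cons_of_ne_nil hL
  calc #{a | IsReduced (a :: b :: L)} ≤ #(univ.erase (b.1, !b.2)) := by
        refine card_le_card fun a ha => mem_erase.2 ⟨?_, mem_univ _⟩
        rintro rfl
        simpa using (isReduced_cons_cons.1 (mem_filter.1 ha).2).1
    _ = 2 * Fintype.card α - 1 := by
        rw [card_erase_of_mem (mem_univ _), card_univ, Fintype.card_prod, Fintype.card_bool,
          mul_comm]

lemma card_sphere_succ_le_mul {k m : ℕ}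
    (hm : ∀ g ∈ sphere (α := α) k, #{a | IsReduced (a :: g.toWord)} ≤ m) :
    #(sphere (α := α) (k + 1)) ≤ m * #(sphere (α := α) k) := by
  have himage : (sphere (k + 1)).image (fun g => mk g.toWord.tail) ⊆ sphere (α := α) k := by
    intro b hb
    obtain ⟨g, hg, rfl⟩ := mem_image.1 hb
    rw [mem_sphere, norm, toWord_mk_of_isReduced (isReduced_toWord.infix
      (List.tail_suffix _).isInfix), List.length_tail, ← norm, mem_sphere.1 hg, Nat.add_sub_cancel]
  refine (card_le_mul_card_image _ m fun b hb => ?_).trans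
    (Nat.mul_le_mul_left m (card_le_card himage))
  refine (card_le_card fun g hg => ?_).trans
    ((card_image_le (f := fun a => mk (a :: b.toWord))).trans (hm b (himage hb)))
  obtain ⟨hg, hgb⟩ := mem_filter.1 hg
  obtain ⟨a, L, hL⟩ := List.exists_cons_of_length_eq_add_one (mem_sphere.1 hg)
  have hred : IsReduced (a :: L) := hL ▸ isReduced_toWord
  have hb : b.toWord = L := by
    rw [← hgb, hL, List.tail_cons,
      toWord_mk_of_isReduced (hred.infix (List.suffix_cons a L).isInfix)]
  refine mem_image.2 ⟨a, mem_filter.2 ⟨mem_univ _, hb ▸ hred⟩, ?_⟩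
  rw [hb, ← hL, mk_toWord]

lemma card_sphere_succ_le (k : ℕ) :
    #(sphere (α := α) (k + 1)) ≤ 2 * Fintype.card α * (2 * Fintype.card α - 1) ^ k := by
  induction k with
  | zero =>
    refine (card_sphere_succ_le_mul (m := 2 * Fintype.card α)
      fun g _ => (card_filter_le _ _).trans ?_).trans ?_
    · exact (card_univ.trans (by simp [Fintype.card_prod, mul_comm])).le
    · simp [sphere_zero]
  | succ k ih =>
    refine (card_sphere_succ_le_mul fun g hg =>
      card_filter_isReduced_cons_le (L := g.toWord) ?_).trans ?_
    · rw [Ne, toWord_eq_nil_iff, ← norm_eq_zero, mem_sphere.1 hg]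
      omega
    · exact (Nat.mul_le_mul_left _ ih).trans_eq (by ring)

lemma card_ball_mul_add_one_le [Nonempty α] (k : ℕ) :
    (Fintype.card α - 1) * #(ball (α := α) k) + 1 ≤
      Fintype.card α * (2 * Fintype.card α - 1) ^ k := by
  obtain ⟨m, hm⟩ : ∃ m, Fintype.card α = m + 1 := Nat.exists_eq_add_one.2 Fintype.card_pos
  have hq : 2 * (m + 1) - 1 = 2 * m + 1 := by omega
  rw [hm, hq, Nat.add_sub_cancel]
  induction k with
  | zero => simp [ball, sphere_zero]
  | succ k ih =>
    have hsphere := card_sphere_succ_le (α := α) k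
    rw [hm, hq] at hsphere
    calc m * #(ball (k + 1)) + 1
        ≤ (m * #(ball (α := α) k) + 1) + m * #(sphere (α := α) (k + 1)) := by
          rw [ball_succ]
          linarith [Nat.mul_le_mul_left m (card_union_le (ball (α := α) k) (sphere (k + 1)))]
      _ ≤ (m + 1) * (2 * m + 1) ^ k + m * (2 * (m + 1) * (2 * m + 1) ^ k) :=
          add_le_add ih (Nat.mul_le_mul_left m hsphere)
      _ = (m + 1) * (2 * m + 1) ^ (k + 1) := by ring

theorem card_add_one_le_of_isDDC {S : Finset (FreeGroup α)} (hS : IsDDC (S : Set (FreeGroup α)))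
    {R : ℕ} (hR : ∀ g ∈ S, g.norm ≤ R) (e : ℕ) :
    #S + 1 ≤ #(ball (α := α) e) + #(ball (α := α) (2 * R - 2 * e)) := by
  have himage : S.image (truncate e) ⊆ ball e := fun b hb => by
    obtain ⟨g, -, rfl⟩ := mem_image.1 hb
    rw [mem_ball, norm_truncate]
    exact min_le_left _ _
  have hpairs : #{p ∈ S.offDiag | truncate e p.1 = truncate e p.2} ≤
      #((ball (α := α) (2 * R - 2 * e)).erase 1) := by
    refine card_le_card_of_injOn (fun p => p.1⁻¹ * p.2) (fun p hp => ?_) fun p hp p' hp' hpp' => ?_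
    · obtain ⟨hp, hpe⟩ := mem_filter.1 hp
      obtain ⟨hg, hh, hne⟩ := mem_offDiag.1 hp
      have hgh := norm_inv_mul_add_two_mul_le_of_truncate_eq hne hpe
      have hgR := hR _ hg
      have hhR := hR _ hh
      exact mem_erase.2 ⟨fun h1 => hne (inv_mul_eq_one.1 h1),
        mem_ball.2 (show (p.1⁻¹ * p.2).norm ≤ _ by omega)⟩
    · obtain ⟨hg, hh, hne⟩ := mem_offDiag.1 (mem_filter.1 hp).1
      obtain ⟨hg', hh', hne'⟩ := mem_offDiag.1 (mem_filter.1 hp').1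
      obtain ⟨h1, h2⟩ := hS _ hg _ hh _ hg' _ hh' hne hne' hpp'
      exact Prod.ext h1 h2
  have hsplit := card_le_card_image_add_card_filter_offDiag (truncate e) S
  have hsmall := card_le_card himage
  rw [card_erase_of_mem (mem_ball.2 (by simp : (1 : FreeGroup α).norm ≤ _))] at hpairs
  have hpos : 0 < #(ball (α := α) (2 * R - 2 * e)) := card_pos.2 ⟨1, by simp⟩
  omega

theorem ncard_mul_le_of_isDDC [Nonempty α] {D : Set (FreeGroup α)} (hD : IsDDC D) {d : ℕ}
    (hd : ∀ g ∈ D, ∀ h ∈ D, (g⁻¹ * h).norm ≤ d) (e : ℕ) :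
    (Fintype.card α - 1) * D.ncard ≤ Fintype.card α *
      ((2 * Fintype.card α - 1) ^ e + (2 * Fintype.card α - 1) ^ (2 * ((d + 1) / 2) - 2 * e)) := by
  obtain rfl | ⟨g₀, hg₀⟩ := D.eq_empty_or_nonempty
  · simp
  have hfin : D.Finite := ((ball d).finite_toSet.image (g₀ * ·)).subset fun g hg =>
    ⟨g₀⁻¹ * g, mem_ball.2 (hd g₀ hg₀ g hg), mul_inv_cancel_left g₀ g⟩
  obtain ⟨v, hv⟩ := exists_norm_inv_mul_le_of_diam_le (S := hfin.toFinset)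
    ⟨g₀, hfin.mem_toFinset.2 hg₀⟩ (by simpa using hd)
  set S := hfin.toFinset.image (v⁻¹ * ·)
  have hS : IsDDC (S : Set (FreeGroup α)) := by
    rw [coe_image, hfin.coe_toFinset]
    exact hD.image_mul_left v⁻¹
  have hR : ∀ g ∈ S, g.norm ≤ (d + 1) / 2 := by
    simpa only [S, forall_mem_image] using hv
  have hcard : #S = D.ncard := by
    rw [card_image_of_injective _ (mul_right_injective v⁻¹), Set.ncard_eq_toFinset_card D hfin]
  have hcount := Nat.mul_le_mul_left (Fintype.card α - 1) (card_add_one_le_of_isDDC hS hR e)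
  have hsmall := card_ball_mul_add_one_le (α := α) e
  have hlarge := card_ball_mul_add_one_le (α := α) (2 * ((d + 1) / 2) - 2 * e)
  rw [← hcard]
  linarith [mul_add (Fintype.card α - 1) #S 1, mul_add (Fintype.card α - 1)
    #(ball (α := α) e) #(ball (α := α) (2 * ((d + 1) / 2) - 2 * e))]

end FreeGroup

lemma le_div_mul_pow_of_mul_le {N n t : ℝ} {d : ℕ} (hN : 0 ≤ N) (hn : 2 ≤ n) (ht : 1 < t)
    (h : (n - 1) * N ≤ n * (t ^ (d + 3) + t ^ (d + 1))) :
    N ≤ 2 * n * (t ^ 6 + n) / (t * (t ^ 2 - 1)) * t ^ d := by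
  have hden : 0 < t * (t ^ 2 - 1) := by nlinarith
  rw [div_mul_eq_mul_div, le_div_iff₀ hden]
  calc N * (t * (t ^ 2 - 1)) ≤ (n - 1) * (N * (t * (t ^ 2 - 1))) :=
        le_mul_of_one_le_left (by positivity) (by linarith)
    _ = ((n - 1) * N) * (t * (t ^ 2 - 1)) := by ring
    _ ≤ n * (t ^ (d + 3) + t ^ (d + 1)) * (t * (t ^ 2 - 1)) :=
        mul_le_mul_of_nonneg_right h hden.le
    _ = n * t ^ d * (t ^ 6 - t ^ 2) := by ring
    _ ≤ n * t ^ d * (2 * (t ^ 6 + n)) :=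
        mul_le_mul_of_nonneg_left (by linarith [pow_pos (zero_lt_one.trans ht) 6, sq_nonneg t])
          (by positivity)
    _ = 2 * n * (t ^ 6 + n) * t ^ d := by ring

lemma le_div_mul_rpow_of_mul_le_pow_add_pow {N n : ℝ} {d e f : ℕ} (hN : 0 ≤ N) (hn : 2 ≤ n)
    (he : 3 * e ≤ d + 3) (hf : 3 * f ≤ d + 1)
    (h : (n - 1) * N ≤ n * ((2 * n - 1) ^ e + (2 * n - 1) ^ f)) :
    N ≤ 2 * n * (4 * n ^ 2 - 3 * n + 1) /
      ((2 * n - 1) ^ ((1 : ℝ) / 3) * ((2 * n - 1) ^ ((2 : ℝ) / 3) - 1)) *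
        (2 * n - 1) ^ ((d : ℝ) / 3) := by
  set q := 2 * n - 1
  set t := q ^ ((1 : ℝ) / 3)
  have hq : 1 < q := by linarith
  have ht : 1 < t := Real.one_lt_rpow hq (by norm_num)
  have hrpow (m : ℕ) : q ^ ((m : ℝ) / 3) = t ^ m := by
    rw [← Real.rpow_mul_natCast (by linarith)]
    ring_nf
  have hpow (k : ℕ) : q ^ k = t ^ (3 * k) := by
    rw [← hrpow, Nat.cast_mul, Nat.cast_ofNat, mul_div_cancel_left₀ _ three_ne_zero,
      Real.rpow_natCast]
  have h' : (n - 1) * N ≤ n * (t ^ (d + 3) + t ^ (d + 1)) := by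
    rw [hpow, hpow] at h
    refine h.trans (mul_le_mul_of_nonneg_left (add_le_add ?_ ?_) (by positivity)) <;>
      exact pow_le_pow_right₀ ht.le (by omega)
  have h2 : q ^ ((2 : ℝ) / 3) = t ^ 2 := by rw [← hrpow]; norm_num
  have h6 : 4 * n ^ 2 - 3 * n + 1 = t ^ 6 + n := by
    rw [← hrpow]
    norm_num
    ring
  rw [h2, hrpow d, h6]
  exact le_div_mul_pow_of_mul_le hN hn ht h'

theorem stmt12 (α : Type*) [Fintype α] [DecidableEq α] (n : ℕ) (hn : 2 ≤ n)
    (hcard : Fintype.card α = n) :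
    ∃ c : ℝ, c = (2 * n * (4 * n ^ 2 - 3 * n + 1) : ℝ) /
        (((2 * n - 1 : ℝ) ^ ((1 : ℝ) / 3)) * ((2 * n - 1 : ℝ) ^ ((2 : ℝ) / 3) - 1)) ∧
      ∀ (d : ℕ) (D : Set (FreeGroup α)), IsDDC D →
        (∀ g ∈ D, ∀ h ∈ D, (g⁻¹ * h).norm ≤ d) →
        (D.ncard : ℝ) ≤ c * (2 * n - 1 : ℝ) ^ ((d : ℝ) / 3) := by
  refine ⟨_, rfl, fun d D hD hdiam => ?_⟩
  subst hcard
  have : Nonempty α := Fintype.card_pos_iff.1 (by omega)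
  have hcount := (Nat.cast_le (α := ℝ)).2 (FreeGroup.ncard_mul_le_of_isDDC hD hdiam (d / 3 + 1))
  push_cast [show 1 ≤ Fintype.card α by omega, show 1 ≤ 2 * Fintype.card α by omega] at hcount
  exact le_div_mul_rpow_of_mul_le_pow_add_pow (Nat.cast_nonneg _) (by exact_mod_cast hn)
    (by omega) (by omega) hcount
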